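/- For every integer n, letting α = 3 + (9*n + 5)/(3*(2*n + 1)*(9*n + 4)), the Möbius transformation given by the matrix B_α * A^{-1} * B_α^{2n+1} * A^{-3(9n+4)(9n+5)} sends 0 to 1/2, where A = [[1,1],[0,1]] and B_α = [[1,0],[α,1]]. -/

import Mathlib

/-!
Both generators are unipotent, so `A ^ m` and `B_α ^ m` just scale the off-diagonal entry by `m`,
and `M` is a product `L α * U (-1) * L ((2n+1) α) * U (-N)` of four elementary matrices with
`N = 3 (9n+4) (9n+5)`. Its entries `M 0 1`, `M 1 1` are then polynomials in `α` and `n`; modulo the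
relation `(α - 3) * 3 (2n+1) (9n+4) = 9n+5` defining `α` they reduce to `K` and `2 K` with
`K = 9 (9n+4)^2 (2n+1) ≠ 0`.
-/

open Matrix

section Unitriangular

variable {R : Type*} [CommRing R]

theorem upper_unitriangular_zpow (x : R) (m : ℤ) :
    !![1, x; 0, 1] ^ m = !![1, m * x; 0, 1] := by
  have hdet : IsUnit (!![1, x; 0, 1] : Matrix (Fin 2) (Fin 2) R).det := by
    simp [det_fin_two_of]
  have hinv : (!![1, x; 0, 1] : Matrix (Fin 2) (Fin 2) R)⁻¹ = !![1, -x; 0, 1] :=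
    inv_eq_left_inv (by simp [one_fin_two])
  induction m using Int.induction_on with
  | zero => simp [one_fin_two]
  | succ k ih =>
    rw [zpow_add_one hdet, ih, mul_fin_two]
    simp only [mul_one, mul_zero, add_zero, zero_mul, zero_add, one_mul]
    push_cast; ring_nf
  | pred k ih =>
    rw [zpow_sub_one hdet, ih, hinv, mul_fin_two]
    simp only [mul_one, mul_zero, add_zero, zero_mul, zero_add, one_mul]
    push_cast; ring_nf

theorem lower_unitriangular_zpow (x : R) (m : ℤ) :
    !![1, 0; x, 1] ^ m = !![1, 0; m * x, 1] := by
  have h := congrArg transpose (upper_unitriangular_zpow x m)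
  rw [transpose_zpow] at h
  convert h using 2 <;> ext i j <;> fin_cases i <;> fin_cases j <;> rfl

theorem lower_mul_upper_mul_lower_mul_upper (a b c d : R) :
    !![1, 0; a, 1] * !![1, b; 0, 1] * !![1, 0; c, 1] * !![1, d; 0, 1] =
      !![1 + b * c, (1 + b * c) * d + b;
        a + (a * b + 1) * c, (a + (a * b + 1) * c) * d + a * b + 1] := by
  simp only [mul_fin_two, EmbeddingLike.apply_eq_iff_eq, vecCons_inj, and_true]
  refine ⟨⟨?_, ?_⟩, ?_, ?_⟩ <;> ring

end Unitriangular

theorem mobius_zero_second_family (x a : ℝ) (hx₁ : 2 * x + 1 ≠ 0) (hx₂ : 9 * x + 4 ≠ 0)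
    (ha : (a - 3) * (3 * (2 * x + 1) * (9 * x + 4)) = 9 * x + 5) :
    let c := (2 * x + 1) * a
    let d := -(3 * (9 * x + 4) * (9 * x + 5))
    ((1 + -1 * c) * d + -1) / ((a + (a * -1 + 1) * c) * d + a * -1 + 1) = 1 / 2 := by
  intro c d
  have hnum : (1 + -1 * c) * d + -1 = 9 * (9 * x + 4) ^ 2 * (2 * x + 1) := by
    linear_combination (9 * x + 5) * ha
  have hden : (a + (a * -1 + 1) * c) * d + a * -1 + 1 = 2 * (9 * (9 * x + 4) ^ 2 * (2 * x + 1)) := by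
    linear_combination ((9 * x + 5) * (a + 2) - 3) * ha
  rw [hnum, hden, div_mul_cancel_right₀ (by positivity), one_div]

theorem orbit_test_second_family (n : ℤ) :
    let α : ℝ := 3 + (9 * (n : ℝ) + 5) / (3 * (2 * (n : ℝ) + 1) * (9 * (n : ℝ) + 4))
    let A : Matrix (Fin 2) (Fin 2) ℝ := !![1, 1; 0, 1]
    let B : Matrix (Fin 2) (Fin 2) ℝ := !![1, 0; α, 1]
    let M : Matrix (Fin 2) (Fin 2) ℝ :=
      B * A⁻¹ * B ^ (2 * n + 1) * A ^ (-(3 * (9 * n + 4) * (9 * n + 5)))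
    M 0 1 / M 1 1 = 1 / 2 := by
  intro α A B M
  have hn₁ : 2 * (n : ℝ) + 1 ≠ 0 := by exact_mod_cast (by omega : 2 * n + 1 ≠ 0)
  have hn₂ : 9 * (n : ℝ) + 4 ≠ 0 := by exact_mod_cast (by omega : 9 * n + 4 ≠ 0)
  have hα : (α - 3) * (3 * (2 * n + 1) * (9 * n + 4)) = 9 * (n : ℝ) + 5 := by
    rw [add_sub_cancel_left, div_mul_cancel₀ _ (by positivity)]
  have hM : M = !![1, 0; α, 1] * !![1, -1; 0, 1] * !![1, 0; (2 * (n : ℝ) + 1) * α, 1] *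
      !![1, -(3 * (9 * (n : ℝ) + 4) * (9 * n + 5)); 0, 1] := by
    simp only [M, A, B, ← Matrix.zpow_neg_one, upper_unitriangular_zpow, lower_unitriangular_zpow]
    push_cast
    ring_nf
  rw [hM, lower_mul_upper_mul_lower_mul_upper]
  exact mobius_zero_second_family n α hn₁ hn₂ hα
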